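/- arXiv:2209.05852 — 5 statements merged into one kernel-verified Lean document; each statement's English description precedes it below -/
import Mathlib

section
/- Let n be a positive integer, let μ_n be the group of n-th roots of unity in ℂ, and let χ : μ_n → ℂˣ be a character whose order is s (so s divides n). Then for every positive integer m, the normalized sum (1/m!) · Σ ∏_{j=1}^{m} χ(ζ_j), where the sum ranges over all m-tuples (ζ_1, …, ζ_m) of pairwise distinct elements of μ_n, equals (-1)^{(s+1)·(m/s)} · C(n/s, m/s) if s divides m, and equals 0 otherwise. -/
open Finset Polynomial

noncomputable instance rootsOfUnityFintypeOfFinite (n : ℕ) [NeZero n] :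
    Fintype (rootsOfUnity n ℂ) :=
  Fintype.ofFinite _

private lemma aux_card_fiber {α : Type*} [Fintype α] [DecidableEq α] (m : ℕ)
    (t : Finset α) (ht : t.card = m) :
    (Finset.univ.filter (fun f : Fin m → α =>
        Function.Injective f ∧ Finset.image f Finset.univ = t)).card = m.factorial := by
  rw [← Fintype.card_subtype]
  have e : {f : Fin m → α // Function.Injective f ∧ Finset.image f Finset.univ = t}
      ≃ (Fin m ≃ {x // x ∈ t}) := by
    refine
      { toFun := fun f => Equiv.ofBijective
          (fun j => (⟨f.1 j, by
            have := Finset.mem_image_of_mem f.1 (Finset.mem_univ j)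
            rwa [f.2.2] at this⟩ : {x // x ∈ t}))
          ((Fintype.bijective_iff_injective_and_card _).mpr
            ⟨fun a b hab => f.2.1 (congrArg Subtype.val hab), by simp [ht]⟩)
        invFun := fun e => ⟨fun j => (e j : α), ?_, ?_⟩
        left_inv := ?_
        right_inv := ?_ }
    · exact fun a b hab => e.injective (Subtype.ext hab)
    · refine Finset.eq_of_subset_of_card_le (fun x hx => ?_) ?_
      · obtain ⟨j, _, rfl⟩ := Finset.mem_image.mp hx
        exact (e j).2
      · rw [ht, Finset.card_image_of_injective _ (fun a b hab => e.injective (Subtype.ext hab))]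
        simp
    · intro f; ext j; rfl
    · intro e; ext j; rfl
  rw [Fintype.card_congr e, Fintype.card_equiv (Fintype.equivFinOfCardEq (by simp [ht])).symm]
  simp

private lemma aux_sum_inj {α : Type*} [Fintype α] [DecidableEq α] (m : ℕ) (g : α → ℂ) :
    ∑ f ∈ Finset.univ.filter (fun f : Fin m → α => Function.Injective f), ∏ j, g (f j)
      = (m.factorial : ℂ) * ∑ t ∈ Finset.univ.powersetCard m, ∏ a ∈ t, g a := by
  rw [← Finset.sum_fiberwise_of_maps_to
      (g := fun f : Fin m → α => Finset.image f Finset.univ)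
      (t := Finset.univ.powersetCard m)
      (fun f hf => by
        rw [Finset.mem_powersetCard_univ,
          Finset.card_image_of_injective _ (Finset.mem_filter.mp hf).2]
        simp)]
  rw [Finset.mul_sum]
  refine Finset.sum_congr rfl fun t ht => ?_
  have htc : t.card = m := (Finset.mem_powersetCard_univ.mp ht)
  have h1 : ∀ f ∈ (Finset.univ.filter (fun f : Fin m → α => Function.Injective f)).filter
      (fun f => Finset.image f Finset.univ = t), (∏ j, g (f j)) = ∏ a ∈ t, g a := by
    intro f hf
    simp only [Finset.mem_filter, Finset.mem_univ, true_and] at hf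
    rw [← hf.2, Finset.prod_image (fun a _ b _ hab => hf.1 hab)]
  rw [Finset.sum_congr rfl h1, Finset.sum_const, Finset.filter_filter]
  rw [aux_card_fiber m t htc, nsmul_eq_mul]

private lemma aux_nthroots_prod (s : ℕ) (hs : 0 < s) :
    ∏ z ∈ nthRootsFinset s (1 : ℂ), (X + C z) = X ^ s - C ((-1 : ℂ) ^ s) := by
  have hprim := Complex.isPrimitiveRoot_exp s hs.ne'
  have hQ : (X : ℂ[X]) ^ s - 1 = ∏ z ∈ nthRootsFinset s (1 : ℂ), (X - C z) :=
    X_pow_sub_one_eq_prod hs hprim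
  have hcard : (nthRootsFinset s (1 : ℂ)).card = s := hprim.card_nthRootsFinset
  have h2 := congrArg (fun p : ℂ[X] => p.comp (-X)) hQ
  simp only [sub_comp, pow_comp, X_comp, one_comp, Polynomial.prod_comp, C_comp] at h2
  have h3 : ∀ z : ℂ, (-X - C z : ℂ[X]) = -1 * (X + C z) := fun z => by ring
  rw [Finset.prod_congr rfl (fun z _ => h3 z), Finset.prod_mul_distrib,
    Finset.prod_const, hcard] at h2
  have h4 : ((-1 : ℂ[X]) ^ s) * ((-1 : ℂ[X]) ^ s) = 1 := by
    rw [← mul_pow]; simp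
  have hC : C ((-1 : ℂ) ^ s) = (-1 : ℂ[X]) ^ s := by
    rw [map_pow]; simp
  rw [hC]
  have h5 : (-X : ℂ[X]) ^ s = (-1) ^ s * X ^ s := by rw [neg_pow]
  rw [h5] at h2
  linear_combination (-(-1 : ℂ[X]) ^ s) * h2
    + ((X : ℂ[X]) ^ s - ∏ z ∈ nthRootsFinset s (1 : ℂ), (X + C z)) * h4

private lemma aux_coeff (s r : ℕ) (hs : 0 < s) (c : ℂ) (k : ℕ) :
    ((X ^ s + C c : ℂ[X]) ^ r).coeff k
      = if s ∣ k ∧ k / s ≤ r then c ^ (r - k / s) * (r.choose (k / s) : ℂ) else 0 := by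
  rw [add_pow, finset_sum_coeff]
  have hterm : ∀ i, ((X ^ s : ℂ[X]) ^ i * C c ^ (r - i) * (r.choose i : ℂ[X])).coeff k
      = if k = s * i then c ^ (r - i) * (r.choose i : ℂ) else 0 := by
    intro i
    have he : (X ^ s : ℂ[X]) ^ i * C c ^ (r - i) * (r.choose i : ℂ[X])
        = C (c ^ (r - i) * (r.choose i : ℂ)) * X ^ (s * i) := by
      rw [← pow_mul, ← C_pow, ← C_eq_natCast, C_mul]; ring
    rw [he, coeff_C_mul, coeff_X_pow]
    split <;> simp
  rw [Finset.sum_congr rfl fun i _ => hterm i]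
  by_cases hk : s ∣ k ∧ k / s ≤ r
  · obtain ⟨⟨d, rfl⟩, hd⟩ := hk
    rw [Nat.mul_div_cancel_left _ hs] at hd ⊢
    have h1 : ∀ i ∈ Finset.range (r + 1),
        (if s * d = s * i then c ^ (r - i) * (r.choose i : ℂ) else 0)
          = if d = i then c ^ (r - i) * (r.choose i : ℂ) else 0 := by
      intro i _
      congr 1
      simp [Nat.mul_left_cancel_iff hs]
    rw [Finset.sum_congr rfl h1, Finset.sum_ite_eq, if_pos]
    · rw [if_pos ⟨⟨d, rfl⟩, hd⟩]
    · simp [Nat.lt_succ_iff, hd]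
  · rw [if_neg hk]
    refine Finset.sum_eq_zero fun i hi => ?_
    rw [if_neg]
    rintro rfl
    simp only [Finset.mem_range, Nat.lt_succ_iff] at hi
    exact hk ⟨⟨i, rfl⟩, by rw [Nat.mul_div_cancel_left _ hs]; exact hi⟩

private lemma aux_group_prod (n : ℕ) [NeZero n] (χ : rootsOfUnity n ℂ →* ℂˣ) (s : ℕ)
    (hs : Nat.card χ.range = s) :
    ∏ ζ : rootsOfUnity n ℂ, (X + C ((χ ζ : ℂˣ) : ℂ))
      = (∏ z ∈ nthRootsFinset s (1 : ℂ), (X + C z)) ^ (n / s) := by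
  classical
  haveI : Finite χ.range := Finite.of_equiv _ (QuotientGroup.quotientKerEquivRange χ).toEquiv
  haveI := Fintype.ofFinite χ.range
  have hcardR : Fintype.card χ.range = s := by rw [← Nat.card_eq_fintype_card, hs]
  have hcardG : Fintype.card (rootsOfUnity n ℂ) = n := by
    rw [← Nat.card_eq_fintype_card]; exact Complex.card_rootsOfUnity n
  have hs0 : 0 < s := by rw [← hcardR]; exact Fintype.card_pos
  have hfilt : ∀ v : χ.range,
      (univ.filter fun ζ : rootsOfUnity n ℂ => χ.rangeRestrict ζ = v)
        = (univ.filter fun ζ : rootsOfUnity n ℂ => χ ζ = (v : ℂˣ)) := by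
    intro v
    apply Finset.filter_congr
    intro ζ _
    simp [Subtype.ext_iff]
  have key : ∀ w : χ.range,
      n = s * (univ.filter fun ζ : rootsOfUnity n ℂ => χ.rangeRestrict ζ = w).card := by
    intro w
    have htot := Finset.card_eq_sum_card_fiberwise
      (f := χ.rangeRestrict) (s := univ) (t := univ) (fun x _ => mem_univ _)
    rw [card_univ, hcardG] at htot
    refine htot.trans ?_
    have hconst : ∀ v : χ.range,
        (univ.filter fun ζ => χ.rangeRestrict ζ = v).card
          = (univ.filter fun ζ => χ.rangeRestrict ζ = w).card := by
      intro v
      rw [hfilt v, hfilt w]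
      exact MonoidHom.card_fiber_eq_of_mem_range χ v.2 w.2
    rw [Finset.sum_congr rfl fun v _ => hconst v, Finset.sum_const, card_univ, hcardR,
      smul_eq_mul]
  have hfib : ∀ w : χ.range,
      (univ.filter fun ζ : rootsOfUnity n ℂ => χ.rangeRestrict ζ = w).card = n / s := by
    intro w
    exact (Nat.div_eq_of_eq_mul_left hs0 ((key w).trans (mul_comm s _))).symm
  rw [← Finset.prod_fiberwise_of_maps_to (g := χ.rangeRestrict) (t := univ)
    (fun x _ => mem_univ _) (fun ζ => X + C ((χ ζ : ℂˣ) : ℂ))]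
  have hinner : ∀ w : χ.range,
      (∏ ζ ∈ univ.filter (fun ζ : rootsOfUnity n ℂ => χ.rangeRestrict ζ = w),
        (X + C ((χ ζ : ℂˣ) : ℂ))) = (X + C ((w : ℂˣ) : ℂ)) ^ (n / s) := by
    intro w
    rw [Finset.prod_congr rfl (fun ζ hζ => ?_), Finset.prod_const, hfib w]
    obtain ⟨-, h⟩ := Finset.mem_filter.mp hζ
    have : (χ ζ : ℂˣ) = (w : ℂˣ) := by rw [← h]; rfl
    rw [this]
  rw [Finset.prod_congr rfl (fun w _ => hinner w), ← Finset.prod_pow]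
  have hinj : Function.Injective (fun w : χ.range => ((w : ℂˣ) : ℂ)) :=
    fun a b hab => Subtype.ext (Units.ext hab)
  have himg : univ.image (fun w : χ.range => ((w : ℂˣ) : ℂ)) = nthRootsFinset s (1 : ℂ) := by
    apply Finset.eq_of_subset_of_card_le
    · intro x hx
      obtain ⟨w, -, rfl⟩ := Finset.mem_image.mp hx
      rw [mem_nthRootsFinset hs0]
      have h1 : w ^ s = 1 := by
        have := pow_card_eq_one' (x := w)
        rwa [hs] at this
      have h2 : (w : ℂˣ) ^ s = 1 := by simpa using congrArg Subtype.val h1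
      simpa using congrArg Units.val h2
    · rw [(Complex.isPrimitiveRoot_exp s hs0.ne').card_nthRootsFinset,
        Finset.card_image_of_injective _ hinj, card_univ, hcardR]
  rw [← himg, Finset.prod_image (fun a _ b _ h => hinj h)]

theorem sum_over_distinct_tuples_of_character
    (n : ℕ) [NeZero n] (χ : rootsOfUnity n ℂ →* ℂˣ) (s : ℕ)
    (hs : Nat.card χ.range = s) (m : ℕ) (hm : 0 < m) :
    (1 / (m.factorial : ℂ)) *
      ∑ f ∈ Finset.univ.filter
          (fun f : Fin m → rootsOfUnity n ℂ => Function.Injective f),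
        ∏ j : Fin m, ((χ (f j) : ℂˣ) : ℂ) =
      if s ∣ m then (-1 : ℂ) ^ ((s + 1) * (m / s)) * ((n / s).choose (m / s) : ℂ)
      else 0 := by
  classical
  have hn0 : 0 < n := Nat.pos_of_ne_zero (NeZero.ne n)
  have hcardG : Fintype.card (rootsOfUnity n ℂ) = n := by
    rw [← Nat.card_eq_fintype_card]; exact Complex.card_rootsOfUnity n
  haveI : Finite χ.range := Finite.of_equiv _ (QuotientGroup.quotientKerEquivRange χ).toEquiv
  haveI := Fintype.ofFinite χ.range
  have hcardR : Fintype.card χ.range = s := by rw [← Nat.card_eq_fintype_card, hs]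
  have hs0 : 0 < s := by rw [← hcardR]; exact Fintype.card_pos
  have hsdvd : s ∣ n := by
    have h1 : Nat.card (rootsOfUnity n ℂ ⧸ χ.ker) = s := by
      rw [← hs]; exact Nat.card_congr (QuotientGroup.quotientKerEquivRange χ).toEquiv
    have h2 := Subgroup.card_quotient_dvd_card χ.ker
    rwa [h1, Nat.card_eq_fintype_card, hcardG] at h2
  set r := n / s with hr_def
  have hr : s * r = n := Nat.mul_div_cancel' hsdvd
  by_cases hmn : m ≤ n
  · -- main case
    rw [aux_sum_inj m (fun ζ : rootsOfUnity n ℂ => ((χ ζ : ℂˣ) : ℂ)), one_div,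
      inv_mul_cancel_left₀ (Nat.cast_ne_zero.mpr m.factorial_ne_zero)]
    have hcoeffP := Finset.prod_X_add_C_coeff (univ : Finset (rootsOfUnity n ℂ))
      (fun ζ : rootsOfUnity n ℂ => ((χ ζ : ℂˣ) : ℂ)) (k := n - m)
      (by rw [card_univ, hcardG]; omega)
    rw [card_univ, hcardG, Nat.sub_sub_self hmn] at hcoeffP
    rw [← hcoeffP, aux_group_prod n χ s hs, aux_nthroots_prod s hs0]
    have hsub : (X ^ s - C ((-1 : ℂ) ^ s) : ℂ[X]) = X ^ s + C ((-1 : ℂ) ^ (s + 1)) := by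
      rw [sub_eq_add_neg, ← map_neg C, pow_succ]
      ring_nf
    rw [hsub, aux_coeff s r hs0 _ (n - m)]
    by_cases hsm : s ∣ m
    · set a := m / s with ha_def
      have hma : s * a = m := Nat.mul_div_cancel' hsm
      have har : a ≤ r := Nat.div_le_div_right hmn
      have hnm : n - m = s * (r - a) := by
        rw [Nat.mul_sub, hr, hma]
      have hdiv : (n - m) / s = r - a := by
        rw [hnm, Nat.mul_div_cancel_left _ hs0]
      rw [if_pos ⟨⟨r - a, hnm⟩, by rw [hdiv]; exact Nat.sub_le r a⟩, if_pos hsm, hdiv]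
      have h1 : r - (r - a) = a := Nat.sub_sub_self har
      rw [h1, Nat.choose_symm har, pow_mul]
    · rw [if_neg, if_neg hsm]
      rintro ⟨h1, -⟩
      exact hsm (by
        have := Nat.dvd_sub hsdvd h1
        rwa [Nat.sub_sub_self hmn] at this)
  · -- m > n : no injective functions
    have hempty : (Finset.univ.filter
        (fun f : Fin m → rootsOfUnity n ℂ => Function.Injective f)) = ∅ := by
      rw [Finset.filter_eq_empty_iff]
      intro f _
      intro hf
      have := Fintype.card_le_of_injective f hf
      rw [Fintype.card_fin, hcardG] at this
      omega
    rw [hempty, Finset.sum_empty, mul_zero]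
    by_cases hsm : s ∣ m
    · rw [if_pos hsm, Nat.choose_eq_zero_of_lt (Nat.div_lt_div_of_lt_of_dvd hsm (by omega))]
      simp
    · rw [if_neg hsm]
end

section
/- Let s and N be positive integers and let ζ_0 ∈ ℂ be a primitive s-th root of unity. Then for every non-negative integer m, Σ ∏_{j=1}^{s} C(N, k_j) · ζ_0^{j·k_j}, where the sum ranges over all s-tuples (k_1, …, k_s) of non-negative integers with k_1 + ⋯ + k_s = m, equals (-1)^{(s+1)·(m/s)} · C(N, m/s) if s divides m, and equals 0 otherwise. -/
/-!
The sum is the coefficient of `X ^ m` in `∏ j, (1 + ζ₀ ^ j X) ^ N` (`j = 1, …, s`). As `ζ₀, …, ζ₀ ^ s`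
run through all `s`-th roots of unity, `∏ j, (1 + ζ₀ ^ j X) = 1 + (-1) ^ (s + 1) X ^ s`, whose `N`-th
power has its coefficients given by the binomial theorem.
-/

open Finset Polynomial

theorem Polynomial.coeff_prod_eq_sum_piAntidiag {R ι : Type*} [CommSemiring R] [DecidableEq ι]
    (s : Finset ι) (f : ι → R[X]) (n : ℕ) :
    (∏ i ∈ s, f i).coeff n = ∑ l ∈ s.piAntidiag n, ∏ i ∈ s, (f i).coeff (l i) := by
  rw [← coeff_coe, ← coeToPowerSeries.ringHom_apply, map_prod, PowerSeries.coeff_prod,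
    finsuppAntidiag, sum_map]
  simp only [coeToPowerSeries.ringHom_apply, coeff_coe]
  exact sum_attach _ fun l : ι → ℕ => ∏ i ∈ s, (f i).coeff (l i)

theorem Polynomial.coeff_one_add_C_mul_X_pow {R : Type*} [CommSemiring R] (a : R) (N k : ℕ) :
    ((1 + C a * X) ^ N).coeff k = N.choose k * a ^ k := by
  have h : (1 + C a * X) ^ N = ((1 + X) ^ N).comp (C a * X) := by
    simp only [pow_comp, add_comp, one_comp, X_comp]
  rw [h, comp_C_mul_X_coeff, coeff_one_add_X_pow]

theorem Polynomial.coeff_one_add_C_mul_X_pow_pow {R : Type*} [CommSemiring R] (a : R)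
    {s : ℕ} (hs : 0 < s) (N m : ℕ) :
    ((1 + C a * X ^ s) ^ N).coeff m = if s ∣ m then N.choose (m / s) * a ^ (m / s) else 0 := by
  have h : (1 + C a * X ^ s) ^ N = expand R s ((1 + C a * X) ^ N) := by
    simp only [map_pow, map_add, map_one, map_mul, expand_C, expand_X]
  rw [h, coeff_expand hs]
  split_ifs
  · exact coeff_one_add_C_mul_X_pow a N (m / s)
  · rfl

theorem IsPrimitiveRoot.prod_nthRootsFinset_one {R M : Type*} [CommRing R] [IsDomain R]
    [CommMonoid M] {ζ : R} {n : ℕ} (hζ : IsPrimitiveRoot ζ n) (f : R → M) :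
    ∏ μ ∈ nthRootsFinset n (1 : R), f μ = ∏ j ∈ range n, f (ζ ^ (j + 1)) := by
  classical
  rw [nthRootsFinset_def, ← Multiset.toFinset_eq hζ.nthRoots_one_nodup, prod_mk,
    hζ.nthRoots_eq (α := ζ) hζ.pow_eq_one, Multiset.map_map]
  simp only [Function.comp_def, ← pow_succ]
  rfl

theorem IsPrimitiveRoot.prod_range_one_add_pow_succ_mul {R : Type*} [CommRing R] [IsDomain R]
    {ζ : R} {n : ℕ} (hζ : IsPrimitiveRoot ζ n) (hn : 0 < n) (x : R) :
    ∏ j ∈ range n, (1 + ζ ^ (j + 1) * x) = 1 + (-1) ^ (n + 1) * x ^ n := by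
  have h := hζ.pow_sub_pow_eq_prod_sub_mul 1 (-x) hn
  rw [hζ.prod_nthRootsFinset_one] at h
  simp only [mul_neg, sub_neg_eq_add, one_pow] at h
  rw [← h, neg_pow x]
  ring

theorem sum_antidiagonalTuple_binomial_primitive_root_general
    (s N : ℕ) (hs : 0 < s) (ζ0 : ℂ) (hζ : IsPrimitiveRoot ζ0 s) (m : ℕ) :
    ∑ k ∈ Finset.Nat.antidiagonalTuple s m,
        ∏ j : Fin s, (N.choose (k j) : ℂ) * ζ0 ^ ((j.1 + 1) * k j) =
      if s ∣ m then (-1 : ℂ) ^ ((s + 1) * (m / s)) * (N.choose (m / s) : ℂ)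
      else 0 := by
  have hprod : ∏ j : Fin s, (1 + C (ζ0 ^ (j.1 + 1)) * X) = 1 + C ((-1) ^ (s + 1)) * X ^ s := by
    rw [Fin.prod_univ_eq_prod_range (fun j => 1 + C (ζ0 ^ (j + 1)) * X)]
    simpa only [map_pow, map_neg, map_one] using
      (hζ.map_of_injective C_injective).prod_range_one_add_pow_succ_mul hs X
  calc ∑ k ∈ Finset.Nat.antidiagonalTuple s m,
        ∏ j : Fin s, (N.choose (k j) : ℂ) * ζ0 ^ ((j.1 + 1) * k j)
      = (∏ j : Fin s, (1 + C (ζ0 ^ (j.1 + 1)) * X) ^ N).coeff m := by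
        simp only [coeff_prod_eq_sum_piAntidiag, piAntidiag_univ_fin_eq_antidiagonalTuple,
          coeff_one_add_C_mul_X_pow, pow_mul]
    _ = _ := by
        rw [prod_pow, hprod, coeff_one_add_C_mul_X_pow_pow _ hs, ← pow_mul, mul_comm]

theorem sum_antidiagonalTuple_binomial_primitive_root
    (s N : ℕ) (hs : 0 < s) (hN : 0 < N) (ζ0 : ℂ) (hζ : IsPrimitiveRoot ζ0 s) (m : ℕ) :
    ∑ k ∈ Finset.Nat.antidiagonalTuple s m,
        ∏ j : Fin s, (N.choose (k j) : ℂ) * ζ0 ^ ((j.1 + 1) * k j) =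
      if s ∣ m then (-1 : ℂ) ^ ((s + 1) * (m / s)) * (N.choose (m / s) : ℂ)
      else 0 :=
  sum_antidiagonalTuple_binomial_primitive_root_general s N hs ζ0 hζ m
end

section
/- Let M and N be positive integers. Then Σ ∏_{i=1}^{l} (-1)^{m_i - 1} · C(N, m_i) = C(M + N - 1, M), where the sum ranges over all compositions (m_1, …, m_l) of M (of all lengths l ≥ 1). -/
/-!
Splitting off the first block shows that the generating function
`G = ∑ₙ (∑_{c ⊨ n} ∏ᵢ f cᵢ) Xⁿ` of weighted compositions satisfies `G = 1 + F G` with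
`F = ∑_{m ≥ 1} f m Xᵐ`, i.e. `G (1 - F) = 1`. For `f m = (-1)^(m-1) C(N, m)` one has
`1 - F = (1 - X)^N`, hence `G = (1 - X)^(-N) = ∑_M C(M + N - 1, M) X^M`.
-/

open PowerSeries

namespace Composition

def consBlock {n : ℕ} (k : Fin (n + 1)) (c : Composition (n - k)) : Composition (n + 1) where
  blocks := (k + 1 : ℕ) :: c.blocks
  blocks_pos := by
    rintro i (_ | ⟨_, hi⟩)
    exacts [k.val.succ_pos, c.blocks_pos hi]
  blocks_sum := by simp only [List.sum_cons, c.blocks_sum]; omega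

theorem consBlock_bijective (n : ℕ) :
    Function.Bijective fun x : Σ k : Fin (n + 1), Composition (n - k) => consBlock x.1 x.2 := by
  constructor
  · rintro ⟨k, c⟩ ⟨k', c'⟩ h
    obtain ⟨hk, hc⟩ : (k : ℕ) + 1 = k' + 1 ∧ c.blocks = c'.blocks :=
      List.cons_eq_cons.1 (congrArg Composition.blocks h)
    obtain rfl : k = k' := Fin.ext (by omega)
    rw [Composition.ext hc]
  · intro c
    obtain ⟨b, t, hbt⟩ := List.exists_cons_of_ne_nil (c.blocks_eq_nil.not.2 n.succ_ne_zero)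
    have hb : 0 < b := c.blocks_pos (by simp [hbt])
    have hsum : b + t.sum = n + 1 := by simpa [hbt] using c.blocks_sum
    refine ⟨⟨⟨b - 1, by omega⟩, ⟨t, fun hi => c.blocks_pos (by simp [hbt, hi]), by dsimp only; omega⟩⟩, ?_⟩
    ext1
    simp only [consBlock, hbt, List.cons.injEq, and_true]
    omega

variable {R : Type*} [CommSemiring R]

theorem sum_prod_map_blocks_succ (f : ℕ → R) (n : ℕ) :
    ∑ c : Composition (n + 1), (c.blocks.map f).prod =
      ∑ k ∈ Finset.range (n + 1), f (k + 1) * ∑ c : Composition (n - k), (c.blocks.map f).prod := by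
  rw [← (consBlock_bijective n).sum_comp, ← Fin.sum_univ_eq_sum_range, ← Finset.univ_sigma_univ,
    Finset.sum_sigma]
  simp [consBlock, Finset.mul_sum]

theorem sum_prod_map_blocks_zero (f : ℕ → R) :
    ∑ c : Composition 0, (c.blocks.map f).prod = 1 := by
  simp [fun c : Composition 0 => c.blocks_eq_nil.2 rfl, composition_card]

end Composition

variable {R : Type*}

noncomputable def compositionSeries [CommSemiring R] (f : ℕ → R) : R⟦X⟧ :=
  PowerSeries.mk fun n => ∑ c : Composition n, (c.blocks.map f).prod

theorem compositionSeries_eq_one_add [CommSemiring R] (f : ℕ → R) :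
    compositionSeries f = 1 + X * PowerSeries.mk (fun n => f (n + 1)) * compositionSeries f := by
  ext (_ | n)
  · simp [compositionSeries, Composition.sum_prod_map_blocks_zero]
  · rw [map_add, coeff_one, if_neg n.succ_ne_zero, zero_add, mul_assoc, coeff_succ_X_mul,
      coeff_mul, Finset.Nat.sum_antidiagonal_eq_sum_range_succ (fun i j => coeff i _ * coeff j _)]
    simp [compositionSeries, Composition.sum_prod_map_blocks_succ]

theorem compositionSeries_mul_one_sub [CommRing R] (f : ℕ → R) :
    compositionSeries f * (1 - X * PowerSeries.mk fun n => f (n + 1)) = 1 := by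
  linear_combination compositionSeries_eq_one_add f

theorem coeff_one_sub_X_pow [CommRing R] (N n : ℕ) :
    coeff n ((1 - X : R⟦X⟧) ^ N) = (-1) ^ n * N.choose n := by
  have : (1 - X : R⟦X⟧) ^ N = rescale (-1) ((1 + Polynomial.X) ^ N : Polynomial R) := by
    simp [sub_eq_add_neg]
  rw [this, coeff_rescale, Polynomial.coeff_coe, Polynomial.coeff_one_add_X_pow]

theorem one_sub_X_mul_signed_choose [CommRing R] (N : ℕ) :
    (1 - X * PowerSeries.mk fun n => (-1 : R) ^ n * N.choose (n + 1)) = (1 - X) ^ N := by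
  ext (_ | n)
  · simp [coeff_one_sub_X_pow]
  · simp [coeff_one_sub_X_pow, pow_succ]

theorem compositionSeries_signed_choose [CommRing R] (N : ℕ) :
    compositionSeries (fun m => (-1 : R) ^ (m - 1) * N.choose m) = invOneSubPow R N := by
  refine left_inv_eq_right_inv (a := (1 - X) ^ N) ?_ ?_
  · convert compositionSeries_mul_one_sub _
    rw [← one_sub_X_mul_signed_choose]
    simp
  · rw [← invOneSubPow_inv_eq_one_sub_pow]
    exact (invOneSubPow R N).inv_val

theorem sum_compositions_signed_binomial_general
    (M N : ℕ) (hN : 0 < N) :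
    ∑ c : Composition M,
        (c.blocks.map fun mi => (-1 : ℤ) ^ (mi - 1) * (N.choose mi : ℤ)).prod =
      ((M + N - 1).choose M : ℤ) := by
  have h := congrArg (coeff M) (compositionSeries_signed_choose (R := ℤ) N)
  rw [invOneSubPow_val_eq_mk_sub_one_add_choose_of_pos _ _ hN, compositionSeries, coeff_mk,
    coeff_mk] at h
  rw [h, Nat.choose_symm_add, ← Nat.sub_add_comm hN, add_comm]

theorem sum_compositions_signed_binomial
    (M N : ℕ) (hM : 0 < M) (hN : 0 < N) :
    ∑ c : Composition M,
        (c.blocks.map fun mi => (-1 : ℤ) ^ (mi - 1) * (N.choose mi : ℤ)).prod =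
      ((M + N - 1).choose M : ℤ) :=
  sum_compositions_signed_binomial_general M N hN
end

section
/- Let k and N be positive integers. Then Σ ∏_{i=1}^{l} (-1)^{k_i - 1} · C(k_i + N - 1, k_i) = C(N, k), where the sum ranges over all compositions (k_1, …, k_l) of k (of all lengths l ≥ 1). In particular the left-hand side equals 1 when k = N and equals 0 when k > N. -/
/-!
Write `F = ∑_{n ≥ 1} f n Xⁿ`. Splitting off the first block of a composition shows that the
generating function `A` of the sums `∑_c ∏ᵢ f (kᵢ)` satisfies `A = 1 + F A`, i.e. `(1 - F) A = 1`.
For `f n = (-1)ⁿ⁻¹ C(n + N - 1, n)` one has `1 - F = (1 + X)^(-N)`, so `A = (1 + X)^N`, whose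
coefficients are `C(N, k)`.
-/

open Finset PowerSeries

namespace Composition

variable {n : ℕ}

lemma headI_cons_tail_blocks (c : Composition (n + 1)) :
    c.blocks.headI :: c.blocks.tail = c.blocks := by
  obtain ⟨a, l, h⟩ := List.exists_cons_of_ne_nil (c.blocks_eq_nil.not.2 n.succ_ne_zero)
  rw [h, List.headI_cons, List.tail_cons]

lemma one_le_headI_blocks (c : Composition (n + 1)) : 1 ≤ c.blocks.headI :=
  c.one_le_blocks (c.headI_cons_tail_blocks ▸ List.mem_cons_self)

lemma sigma_ext {α : Type*} {f : α → ℕ} {x y : Σ a, Composition (f a)} (h₁ : x.1 = y.1)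
    (h₂ : x.2.blocks = y.2.blocks) : x = y := by
  obtain ⟨a, c⟩ := x
  obtain ⟨b, d⟩ := y
  obtain rfl : a = b := h₁
  exact congrArg _ (Composition.ext h₂)

/-- Splitting off the first block, of size `i + 1`, leaves a composition of `j`, where
`i + j = n`. -/
def consEquiv (n : ℕ) : (Σ p : antidiagonal n, Composition p.1.2) ≃ Composition (n + 1) where
  toFun x :=
    { blocks := (x.1.1.1 + 1) :: x.2.blocks
      blocks_pos := by
        rintro i (_ | ⟨_, hi⟩)
        · exact Nat.succ_pos _
        · exact x.2.blocks_pos hi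
      blocks_sum := by
        rw [List.sum_cons, x.2.blocks_sum, add_right_comm, mem_antidiagonal.1 x.1.2] }
  invFun c :=
    ⟨⟨(c.blocks.headI - 1, n + 1 - c.blocks.headI), mem_antidiagonal.2 <| by
        have := c.one_le_headI_blocks
        have := c.blocks.headI_le_sum
        rw [c.blocks_sum] at this
        omega⟩,
      { blocks := c.blocks.tail
        blocks_pos := fun hi => c.blocks_pos (List.mem_of_mem_tail hi)
        blocks_sum := by simp only [List.tail_sum, c.blocks_sum] }⟩
  left_inv := by
    rintro ⟨⟨⟨i, j⟩, hij⟩, c⟩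
    have hj : n + 1 - (i + 1) = j := by have := mem_antidiagonal.1 hij; omega
    exact sigma_ext (Subtype.ext (by simp [hj])) rfl
  right_inv c := by
    ext1
    simp [Nat.sub_add_cancel c.one_le_headI_blocks, c.headI_cons_tail_blocks]

end Composition

variable {R : Type*}

def compositionSum [CommSemiring R] (f : ℕ → R) (n : ℕ) : R :=
  ∑ c : Composition n, (c.blocks.map f).prod

section CommSemiring

variable [CommSemiring R] (f : ℕ → R)

lemma compositionSum_zero : compositionSum f 0 = 1 := by
  simp [compositionSum, fun c : Composition 0 => c.blocks_eq_nil.2 rfl, composition_card]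

lemma compositionSum_succ (n : ℕ) :
    compositionSum f (n + 1) = ∑ p ∈ antidiagonal n, f (p.1 + 1) * compositionSum f p.2 := by
  rw [compositionSum, ← (Composition.consEquiv n).sum_comp, ← univ_sigma_univ, sum_sigma,
    ← sum_coe_sort (antidiagonal n)]
  simp [Composition.consEquiv, compositionSum, mul_sum]

end CommSemiring

lemma one_sub_X_mul_mk_mul_mk_compositionSum [CommRing R] (f : ℕ → R) :
    (1 - X * PowerSeries.mk fun n => f (n + 1)) * PowerSeries.mk (compositionSum f) = 1 := by
  ext (_ | n)
  · simp [compositionSum_zero]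
  · rw [sub_mul, one_mul, mul_assoc, map_sub, coeff_succ_X_mul, coeff_mul, coeff_mk,
      compositionSum_succ, coeff_one, if_neg n.succ_ne_zero]
    simp

lemma compositionSum_eq_coeff_of_mul_eq_one [CommRing R] {f : ℕ → R} {g : R⟦X⟧}
    (hg : (1 - X * PowerSeries.mk fun n => f (n + 1)) * g = 1) (n : ℕ) :
    compositionSum f n = coeff n g := by
  have hA := (mul_comm _ _).trans (one_sub_X_mul_mk_mul_mk_compositionSum f)
  rw [← left_inv_eq_right_inv hA hg, coeff_mk]

lemma one_sub_X_mul_mk_eq_binomialSeries_neg (N : ℕ) :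
    (1 - X * PowerSeries.mk fun n => (-1 : ℤ) ^ n * ((n + N).choose (n + 1) : ℤ)) =
      binomialSeries ℤ (-N : ℤ) := by
  ext (_ | n)
  · simp
  · have : (N : ℤ) + (n + 1 : ℕ) - 1 = (n + N : ℕ) := by push_cast; ring
    rw [binomialSeries_coeff, Ring.choose_neg, this, Ring.choose_natCast, Units.smul_def,
      Int.coe_negOnePow_natCast, map_sub, coeff_succ_X_mul, coeff_mk]
    simp [pow_succ]

lemma compositionSum_signed_choose_eq_choose (N k : ℕ) :
    compositionSum (fun i => (-1 : ℤ) ^ (i - 1) * ((i + N - 1).choose i : ℤ)) k = N.choose k := by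
  refine (compositionSum_eq_coeff_of_mul_eq_one (g := binomialSeries ℤ (N : ℤ)) ?_ k).trans ?_
  · simp only [Nat.add_sub_cancel, Nat.add_right_comm _ 1 N]
    rw [one_sub_X_mul_mk_eq_binomialSeries_neg, ← binomialSeries_add, neg_add_cancel,
      binomialSeries_zero]
  · rw [binomialSeries_coeff, Ring.choose_natCast, smul_eq_mul, mul_one]

theorem sum_compositions_signed_binomial_inverse_general
    (k N : ℕ) :
    (∑ c : Composition k,
        (c.blocks.map fun ki =>
          (-1 : ℤ) ^ (ki - 1) * ((ki + N - 1).choose ki : ℤ)).prod)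
      = (N.choose k : ℤ) ∧
    (k = N →
      (∑ c : Composition k,
        (c.blocks.map fun ki =>
          (-1 : ℤ) ^ (ki - 1) * ((ki + N - 1).choose ki : ℤ)).prod) = 1) ∧
    (k > N →
      (∑ c : Composition k,
        (c.blocks.map fun ki =>
          (-1 : ℤ) ^ (ki - 1) * ((ki + N - 1).choose ki : ℤ)).prod) = 0) := by
  have key := compositionSum_signed_choose_eq_choose N k
  refine ⟨key, fun h => key.trans ?_, fun h => key.trans ?_⟩
  · rw [h, Nat.choose_self, Nat.cast_one]
  · rw [Nat.choose_eq_zero_of_lt h, Nat.cast_zero]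

theorem sum_compositions_signed_binomial_inverse
    (k N : ℕ) (hk : 0 < k) (hN : 0 < N) :
    (∑ c : Composition k,
        (c.blocks.map fun ki =>
          (-1 : ℤ) ^ (ki - 1) * ((ki + N - 1).choose ki : ℤ)).prod)
      = (N.choose k : ℤ) ∧
    (k = N →
      (∑ c : Composition k,
        (c.blocks.map fun ki =>
          (-1 : ℤ) ^ (ki - 1) * ((ki + N - 1).choose ki : ℤ)).prod) = 1) ∧
    (k > N →
      (∑ c : Composition k,
        (c.blocks.map fun ki =>
          (-1 : ℤ) ^ (ki - 1) * ((ki + N - 1).choose ki : ℤ)).prod) = 0) :=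
  sum_compositions_signed_binomial_inverse_general k N
end

section
/- Let k be a finite field and K a field extension of k of finite degree f, and let m be a positive integer. Let ι : M_m(K) → M_{mf}(k) be any k-algebra homomorphism from the algebra of m×m matrices over K to the algebra of mf×mf matrices over k. Then for every y ∈ M_m(K), the characteristic polynomial of ι(y) (a polynomial over k), viewed in K[X] via the inclusion k ⊆ K, equals ∏_{σ ∈ Gal(K/k)} σ(P_y), where P_y ∈ K[X] is the characteristic polynomial of y and σ acts on polynomials coefficientwise. Equivalently, charpoly(ι(y)) = N_{K/k}(charpoly(y)). -/
open Matrix Polynomial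

/-- Conjugate matrices (via an intertwiner with nonzero det, over a domain) have
equal characteristic polynomials. -/
lemma charpoly_eq_of_conj {R : Type*} [CommRing R] [IsDomain R] {n : Type*} [Fintype n]
    [DecidableEq n] {P A B : Matrix n n R} (hP : P.det ≠ 0) (h : P * A = B * P) :
    A.charpoly = B.charpoly := by
  have key : P.map C * charmatrix A = charmatrix B * P.map C := by
    unfold charmatrix
    have h1 : P.map C * (C : R →+* R[X]).mapMatrix A = (C : R →+* R[X]).mapMatrix B * P.map C := by
      have := congrArg (fun M => (C : R →+* R[X]).mapMatrix M) h
      simpa [_root_.map_mul] using this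
    have h2 : P.map C * Matrix.scalar n (X : R[X]) = Matrix.scalar n (X : R[X]) * P.map C := by
      rw [Matrix.scalar_commute] <;> intro r <;> exact Commute.all _ _
    rw [mul_sub, sub_mul, h1, h2]
  have hdet : (P.map C).det ≠ 0 := by
    have hd : (P.map C).det = C P.det := ((C : R →+* R[X]).map_det P).symm
    rw [hd]
    simpa using hP
  have := congrArg Matrix.det key
  rw [det_mul, det_mul] at this
  unfold Matrix.charpoly
  rw [mul_comm ((charmatrix B).det)] at this
  exact mul_left_cancel₀ hdet this

lemma charmatrix_blockDiagonal {R : Type*} [CommRing R] {n α : Type*} [Fintype n] [DecidableEq n]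
    [Fintype α] [DecidableEq α] (M : α → Matrix n n R) :
    charmatrix (blockDiagonal M) = blockDiagonal (fun s => charmatrix (M s)) := by
  ext ⟨i, s⟩ ⟨j, t⟩
  by_cases hst : s = t
  · subst hst
    by_cases hij : i = j
    · subst hij; simp [blockDiagonal_apply]
    · simp [blockDiagonal_apply, charmatrix_apply, diagonal_apply, hij, Prod.ext_iff]
  · simp [blockDiagonal_apply, charmatrix_apply, diagonal_apply, hst, Prod.ext_iff]

lemma charpoly_blockDiagonal {R : Type*} [CommRing R] {n α : Type*} [Fintype n] [DecidableEq n]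
    [Fintype α] [DecidableEq α] (M : α → Matrix n n R) :
    (blockDiagonal M).charpoly = ∏ s, (M s).charpoly := by
  rw [Matrix.charpoly, charmatrix_blockDiagonal, det_blockDiagonal]
  rfl

section
variable {k K : Type*} [Field k] [Fintype k] [Field K] [Algebra k K] [FiniteDimensional k K]

lemma charpoly_comp_leftMulMatrix {f m : ℕ} (b : Module.Basis (Fin f) k K)
    (B : Matrix (Fin m) (Fin m) K) :
    ((Matrix.comp (Fin m) (Fin m) (Fin f) (Fin f) k
        (B.map (Algebra.leftMulMatrix b))).charpoly).map (algebraMap k K) =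
      ∏ σ : K ≃ₐ[k] K, (B.charpoly).map (σ : K →+* K) := by
  haveI : Finite K := Module.finite_of_finite k
  have hcard : Fintype.card (K ≃ₐ[k] K) = f := by
    rw [← Nat.card_eq_fintype_card, IsGalois.card_aut_eq_finrank, Module.finrank_eq_card_basis b, Fintype.card_fin]
  let eσ : Fin f ≃ (K ≃ₐ[k] K) := (Fintype.equivFinOfCardEq hcard).symm
  set P : Matrix (Fin f) (Fin f) K := Matrix.of (fun s t => eσ s (b t)) with hP
  -- P has nonzero determinant (Dedekind independence of characters)
  have hPdet : P.det ≠ 0 := by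
    intro h0
    obtain ⟨g, hg0, hg⟩ := (Matrix.exists_vecMul_eq_zero_iff).mpr h0
    have li : LinearIndependent K (fun s : Fin f => ((eσ s : K →+* K) : K → K)) := by
      have li0 := linearIndependent_monoidHom K K
      have : LinearIndependent K (fun s : Fin f =>
          (((eσ s : K →+* K) : K →* K) : K → K)) := by
        apply li0.comp
        intro s t hst
        apply eσ.injective
        ext x
        exact DFunLike.congr_fun hst x
      exact this
    have hzero : ∀ x : K, ∑ s, g s * eσ s x = 0 := by
      intro x
      have hx := b.sum_repr x
      calc ∑ s, g s * eσ s x = ∑ s, g s * eσ s (∑ t, b.repr x t • b t) := by rw [hx]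
        _ = ∑ s, ∑ t, b.repr x t • (g s * eσ s (b t)) := by
            apply Finset.sum_congr rfl; intro s _
            rw [map_sum, Finset.mul_sum]
            apply Finset.sum_congr rfl; intro t _
            rw [_root_.map_smul, Algebra.smul_def, Algebra.smul_def]
            ring
        _ = ∑ t, b.repr x t • ∑ s, g s * eσ s (b t) := by
            rw [Finset.sum_comm]; simp [Finset.smul_sum]
        _ = 0 := by
            apply Finset.sum_eq_zero; intro t _
            have := congr_fun hg t
            simp [Matrix.vecMul, dotProduct, hP] at this
            rw [this, smul_zero]
    have : g = 0 := by
      have := Fintype.linearIndependent_iff.mp li g ?_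
      · funext s; exact this s
      · funext x
        simpa [Finset.sum_apply] using hzero x
    exact hg0 this
  -- key diagonalization identity
  have key : ∀ c : K, P * (Algebra.leftMulMatrix b c).map (algebraMap k K) =
      Matrix.diagonal (fun s => eσ s c) * P := by
    intro c
    ext s u
    rw [Matrix.mul_apply, Matrix.diagonal_mul]
    have hrepr := b.sum_repr (c * b u)
    have := congrArg (eσ s) hrepr
    rw [map_sum] at this
    simp only [_root_.map_smul] at this
    simp only [Algebra.smul_def] at this
    calc ∑ t, P s t * (Algebra.leftMulMatrix b c).map (algebraMap k K) t u
        = ∑ t, algebraMap k K (b.repr (c * b u) t) * eσ s (b t) := by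
          apply Finset.sum_congr rfl; intro t _
          rw [Matrix.map_apply, Algebra.leftMulMatrix_eq_repr_mul, mul_comm]
          rfl
      _ = eσ s (c * b u) := this
      _ = eσ s c * P s u := by simp [hP, _root_.map_mul]
  -- lift to block matrices
  let CC := Matrix.compRingEquiv (Fin m) (Fin f) K
  have hblock : (Matrix.diagonal fun _ : Fin m => P) *
      (B.map fun c => (Algebra.leftMulMatrix b c).map (algebraMap k K)) =
      (B.map fun c => Matrix.diagonal fun s => eσ s c) *
        (Matrix.diagonal fun _ : Fin m => P) := by
    refine Matrix.ext fun i j => ?_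
    rw [Matrix.diagonal_mul, Matrix.mul_diagonal, Matrix.map_apply, Matrix.map_apply]
    exact key (B i j)
  have hconj := congrArg CC hblock
  rw [_root_.map_mul, _root_.map_mul] at hconj
  have hQ : CC (Matrix.diagonal fun _ : Fin m => P) =
      Matrix.reindex (Equiv.prodComm (Fin f) (Fin m)) (Equiv.prodComm (Fin f) (Fin m))
        (Matrix.blockDiagonal fun _ : Fin m => P) := by
    ext ⟨i, s⟩ ⟨j, t⟩
    by_cases hij : i = j <;>
      simp [CC, Matrix.blockDiagonal_apply, Matrix.diagonal_apply, hij]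
  have hQdet : (CC (Matrix.diagonal fun _ : Fin m => P)).det ≠ 0 := by
    rw [hQ, Matrix.det_reindex_self, Matrix.det_blockDiagonal]
    exact Finset.prod_ne_zero_iff.mpr fun _ _ => hPdet
  have hC : CC (B.map fun c => (Algebra.leftMulMatrix b c).map (algebraMap k K)) =
      (Matrix.comp (Fin m) (Fin m) (Fin f) (Fin f) k (B.map (Algebra.leftMulMatrix b))).map
        (algebraMap k K) := by
    ext ⟨i, s⟩ ⟨j, t⟩; rfl
  have hD : CC (B.map fun c => Matrix.diagonal fun s => eσ s c) =
      Matrix.blockDiagonal (fun s : Fin f => B.map (eσ s)) := by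
    ext ⟨i, s⟩ ⟨j, t⟩
    by_cases hst : s = t <;>
      simp [CC, Matrix.blockDiagonal_apply, Matrix.diagonal_apply, hst]
  rw [hC, hD] at hconj
  have hcp := charpoly_eq_of_conj hQdet hconj
  rw [← Matrix.charpoly_map, hcp, charpoly_blockDiagonal,
    ← Equiv.prod_comp eσ fun σ : K ≃ₐ[k] K => B.charpoly.map (σ : K →+* K)]
  exact Finset.prod_congr rfl fun s _ => Matrix.charpoly_map B ((eσ s : K ≃ₐ[k] K) : K →+* K)

end

lemma sum_mulVec' {R n n' γ : Type*} [NonUnitalNonAssocSemiring R] [Fintype n'] (s : Finset γ)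
    (A : γ → Matrix n n' R) (v : n' → R) :
    (∑ i ∈ s, A i) *ᵥ v = ∑ i ∈ s, (A i) *ᵥ v := by
  ext j
  simp only [Matrix.mulVec, dotProduct, Matrix.sum_apply, Finset.sum_mul, Finset.sum_apply]
  rw [Finset.sum_comm]

theorem charpoly_algHom_eq_norm_charpoly
    (k K : Type*) [Field k] [Fintype k] [Field K] [Algebra k K]
    [FiniteDimensional k K] (f : ℕ) (hf : Module.finrank k K = f)
    (m : ℕ) (hm : 0 < m)
    (ι : Matrix (Fin m) (Fin m) K →ₐ[k] Matrix (Fin (m * f)) (Fin (m * f)) k)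
    (y : Matrix (Fin m) (Fin m) K) :
    ((ι y).charpoly).map (algebraMap k K) =
      ∏ σ : K ≃ₐ[k] K, (y.charpoly).map (σ : K →+* K) := by
  classical
  let b : Module.Basis (Fin f) k K := (Module.finBasis k K).reindex (finCongr hf)
  have hf0 : 0 < f := hf ▸ Module.finrank_pos
  have hmf : 0 < m * f := Nat.mul_pos hm hf0
  let z : Fin m := ⟨0, hm⟩
  let z' : Fin (m * f) := ⟨0, hmf⟩
  set Bl := fun A : Matrix (Fin m) (Fin m) K =>
    Matrix.comp (Fin m) (Fin m) (Fin f) (Fin f) k (A.map (Algebra.leftMulMatrix b)) with hBl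
  -- the image of the elementary idempotent is nonzero
  have hTne : ι (Matrix.single z z (1 : K)) ≠ 0 := by
    intro h0
    have hall : ∀ (i j : Fin m) (c : K), ι (Matrix.single i j c) = 0 := by
      intro i j c
      have e : Matrix.single i j c =
          Matrix.single i z (1 : K) * Matrix.single z z 1 * Matrix.single z j c := by
        rw [Matrix.single_mul_single_same, Matrix.single_mul_single_same, one_mul, one_mul]
      rw [e, _root_.map_mul, _root_.map_mul, h0, mul_zero, zero_mul]
    have h1 : ι 1 = 0 := by
      nth_rw 1 [Matrix.matrix_eq_sum_single (1 : Matrix (Fin m) (Fin m) K)]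
      rw [map_sum]
      refine Finset.sum_eq_zero fun i _ => ?_
      rw [map_sum]
      exact Finset.sum_eq_zero fun j _ => hall i j _
    rw [_root_.map_one] at h1
    have h2 := congr_fun (congr_fun h1 z') z'
    simp [Matrix.one_apply] at h2
  -- pick a vector fixed by the image of the idempotent
  obtain ⟨av, bv, hab⟩ : ∃ a c, ι (Matrix.single z z (1 : K)) a c ≠ 0 := by
    by_contra hc
    push_neg at hc
    exact hTne (Matrix.ext fun a c => hc a c)
  set T := ι (Matrix.single z z (1 : K)) with hT
  set v := T *ᵥ Pi.single bv 1 with hv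
  have hv0 : v ≠ 0 := by
    intro h
    apply hab
    have := congr_fun h av
    simpa [hv] using this
  have hTv : T *ᵥ v = v := by
    rw [hv, Matrix.mulVec_mulVec, hT, ← _root_.map_mul, Matrix.single_mul_single_same, one_mul]
  set w : Fin m × Fin f → (Fin (m * f) → k) :=
    fun p => (ι (Matrix.single p.1 z (b p.2))) *ᵥ v with hw
  -- sums of std basis matrices
  have hsum : ∀ (i : Fin m) (g : Fin f → K),
      Matrix.single i z (∑ s, g s) = ∑ s, Matrix.single i z (g s) := fun i g =>
    map_sum (AddMonoidHom.mk' (fun x : K => Matrix.single i z x)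
      (fun a c => Matrix.single_add i z a c)) g Finset.univ
  -- the key matrix identity
  have hmat : ∀ (A : Matrix (Fin m) (Fin m) K) (j : Fin m) (t : Fin f),
      A * Matrix.single j z (b t) =
        ∑ q : Fin m × Fin f,
          Algebra.leftMulMatrix b (A q.1 j) q.2 t • Matrix.single q.1 z (b q.2) := by
    intro A j t
    rw [Fintype.sum_prod_type]
    conv_lhs => rw [Matrix.matrix_eq_sum_single A]
    rw [Finset.sum_mul]
    refine Finset.sum_congr rfl fun i _ => ?_
    rw [Finset.sum_mul, Finset.sum_eq_single j ?_ ?_]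
    · rw [Matrix.single_mul_single_same]
      have he : A i j * b t = ∑ s, Algebra.leftMulMatrix b (A i j) s t • b s := by
        conv_lhs => rw [← b.sum_repr (A i j * b t)]
        refine Finset.sum_congr rfl fun s _ => ?_
        rw [Algebra.leftMulMatrix_eq_repr_mul]
      rw [he, hsum]
      exact Finset.sum_congr rfl fun s _ => (Matrix.smul_single _ _ _ _).symm
    · intro l _ hl
      rw [Matrix.single_mul_single_of_ne (h := hl)]
    · simp
  -- action of ι on the candidate basis
  have hact : ∀ (A : Matrix (Fin m) (Fin m) K) (p : Fin m × Fin f),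
      (ι A) *ᵥ w p = ∑ q : Fin m × Fin f, Bl A q p • w q := by
    intro A ⟨j, t⟩
    have h1 : (ι A) *ᵥ w (j, t) = (ι (A * Matrix.single j z (b t))) *ᵥ v := by
      have hwjt : w (j, t) = (ι (Matrix.single j z (b t))) *ᵥ v := rfl
      rw [hwjt, Matrix.mulVec_mulVec, ← _root_.map_mul]
    rw [h1, hmat A j t, map_sum, sum_mulVec']
    refine Finset.sum_congr rfl fun q _ => ?_
    rw [_root_.map_smul, Matrix.smul_mulVec]
    rfl
  -- linear independence
  have hli : LinearIndependent k w := by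
    rw [Fintype.linearIndependent_iff]
    intro g hg
    have hcj : ∀ j : Fin m, (∑ s, g (j, s) • b s) = 0 := by
      intro j
      by_contra hne
      set c := ∑ s, g (j, s) • b s with hc
      have h2 : ∑ p : Fin m × Fin f,
          g p • ((ι (Matrix.single z j (1 : K)) * ι (Matrix.single p.1 z (b p.2))) *ᵥ v) = 0 := by
        have h21 := congrArg (fun u => (ι (Matrix.single z j (1 : K))).mulVecLin u) hg
        simpa [Matrix.mulVecLin_apply, map_sum, _root_.map_smul, Matrix.mulVec_mulVec, hw] using h21
      have h2' : ∀ p : Fin m × Fin f,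
          g p • ((ι (Matrix.single z j (1 : K)) * ι (Matrix.single p.1 z (b p.2))) *ᵥ v)
            = if p.1 = j then g p • ((ι (Matrix.single z z (b p.2))) *ᵥ v) else 0 := by
        intro p
        by_cases hp : p.1 = j
        · rw [hp, if_pos rfl, ← _root_.map_mul, Matrix.single_mul_single_same, one_mul]
        · rw [if_neg hp, ← _root_.map_mul,
            Matrix.single_mul_single_of_ne (h := fun hx => hp hx.symm)]
          simp
      rw [Finset.sum_congr rfl (fun p _ => h2' p), Fintype.sum_prod_type] at h2
      have h3 : ∑ s, g (j, s) • ((ι (Matrix.single z z (b s))) *ᵥ v) = 0 := by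
        rw [← h2, Finset.sum_eq_single j]
        · simp
        · intro i _ hi
          exact Finset.sum_eq_zero fun s _ => if_neg hi
        · simp
      have h4 : (ι (Matrix.single z z c)) *ᵥ v = 0 := by
        rw [hc, hsum, map_sum, sum_mulVec']
        rw [← h3]
        refine Finset.sum_congr rfl fun s _ => ?_
        rw [← Matrix.smul_single, _root_.map_smul, Matrix.smul_mulVec]
      have h5 : v = 0 := by
        have h51 : (ι (Matrix.single z z c⁻¹)) *ᵥ ((ι (Matrix.single z z c)) *ᵥ v) = 0 := by
          rw [h4, Matrix.mulVec_zero]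
        rwa [Matrix.mulVec_mulVec, ← map_mul ι, Matrix.single_mul_single_same,
          inv_mul_cancel₀ hne, ← hT, hTv] at h51
      exact hv0 h5
    intro p
    exact Fintype.linearIndependent_iff.mp b.linearIndependent (fun s => g (p.1, s)) (hcj p.1) p.2
  -- build a basis and identify the matrix
  haveI : Nonempty (Fin m × Fin f) := ⟨(z, ⟨0, hf0⟩)⟩
  have hcard : Fintype.card (Fin m × Fin f) = Module.finrank k (Fin (m * f) → k) := by
    simp [Module.finrank_pi]
  let vB : Module.Basis (Fin m × Fin f) k (Fin (m * f) → k) :=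
    basisOfLinearIndependentOfCardEqFinrank hli hcard
  have hvB : ∀ p, vB p = w p := fun p => by
    rw [show vB = _ from rfl, coe_basisOfLinearIndependentOfCardEqFinrank]
  have hlin : Matrix.toLin vB vB (Bl y) = Matrix.toLin' (ι y) := by
    apply vB.ext
    intro p
    rw [Matrix.toLin_self, Matrix.toLin'_apply, hvB, hact y p]
    exact (Finset.sum_congr rfl fun q _ => by rw [hvB]).symm
  have hchar : (ι y).charpoly = (Bl y).charpoly := by
    have e0 : (ι y).charpoly = (Matrix.toLin' (ι y)).charpoly := by
      conv_lhs => rw [← LinearMap.toMatrix'_toLin' (ι y)]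
      rw [← LinearMap.toMatrix_eq_toMatrix',
        LinearMap.charpoly_toMatrix (Matrix.toLin' (ι y)) (Pi.basisFun k (Fin (m * f)))]
    have e1 : (Bl y).charpoly = (Matrix.toLin vB vB (Bl y)).charpoly := by
      conv_lhs => rw [← LinearMap.toMatrix_toLin vB vB (Bl y)]
      rw [LinearMap.charpoly_toMatrix]
    rw [e0, e1, hlin]
  rw [hchar, hBl]
  exact charpoly_comp_leftMulMatrix b y
end
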